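/- arXiv:math/0505531 — 4 statements merged into one kernel-verified Lean document; each statement's English description precedes it below -/
import Mathlib

section
/- Let V and V' be finite-dimensional vector spaces over ℚ, both of dimension n, let B : V × V' → ℚ be a nondegenerate bilinear pairing, let λ be a nonzero rational number, and let f : V → V and g : V' → V' be linear endomorphisms such that B(f(x), g(y)) = λ·B(x, y) for all x ∈ V and y ∈ V'. Then for every nonzero rational number t, det(id_{V'} − t·g) · det f = (−1)^n · λ^n · t^n · det(id_V − (λt)⁻¹·f). -/
/-!
The nondegenerate pairing identifies `V'` with the dual of `V`, and the relation
`B (f x) (g y) = λ B x y` becomes `h ∘ g = λ • id`, where `h` is the transpose of `f` transported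
to `V'`. Hence `h ∘ (id - t • g) = h - λt • id`, and taking determinants gives
`det f · det (id - t • g) = det (f - λt • id) = (-λt)ⁿ det (id - (λt)⁻¹ • f)`.
-/

open Module

namespace LinearMap

theorem det_sub_smul_id_eq_pow_mul_det_id_sub_inv_smul {K V : Type*} [Field K] [AddCommGroup V]
    [Module K V] (f : V →ₗ[K] V) {c : K} (hc : c ≠ 0) :
    LinearMap.det (f - c • LinearMap.id) =
      (-c) ^ finrank K V * LinearMap.det (LinearMap.id - c⁻¹ • f) := by
  have hsplit : f - c • LinearMap.id = (-c) • (LinearMap.id - c⁻¹ • f) := by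
    rw [smul_sub, smul_smul, neg_mul, mul_inv_cancel₀ hc]
    module
  rw [hsplit, det_smul]

variable {R M : Type*} [CommRing R] [AddCommGroup M] [Module R M]

theorem det_mul_det_id_sub_smul_of_comp_eq_smul_id {h g : M →ₗ[R] M} {l : R}
    (hhg : h ∘ₗ g = l • LinearMap.id) (t : R) :
    LinearMap.det h * LinearMap.det (LinearMap.id - t • g) =
      LinearMap.det (h - (l * t) • LinearMap.id) := by
  rw [← map_mul, Module.End.mul_eq_comp, comp_sub, comp_id, comp_smul, hhg, smul_smul,
    mul_comm t l]

variable [Free R M] [Module.Finite R M] {N : Type*} [AddCommGroup N] [Module R N]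

theorem det_symm_conj_dualMap_sub_smul (Φ : N ≃ₗ[R] Dual R M) (f : M →ₗ[R] M) (c : R) :
    LinearMap.det (Φ.symm.conj f.dualMap - c • LinearMap.id) =
      LinearMap.det (f - c • LinearMap.id) := by
  have hconj : Φ.symm.conj f.dualMap - c • LinearMap.id =
      Φ.symm.conj (f - c • LinearMap.id).dualMap := by
    have hdual : (f - c • LinearMap.id).dualMap = f.dualMap - c • LinearMap.id := by
      rw [dualMap_def, map_sub, map_smul, ← dualMap_def, ← dualMap_def, dualMap_id]
    ext y
    simp [hdual]
  rw [hconj, LinearEquiv.conj_apply, comp_assoc, det_conj, det_dualMap]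

theorem det_symm_conj_dualMap (Φ : N ≃ₗ[R] Dual R M) (f : M →ₗ[R] M) :
    LinearMap.det (Φ.symm.conj f.dualMap) = LinearMap.det f := by
  simpa using det_symm_conj_dualMap_sub_smul Φ f 0

end LinearMap

theorem stmt_1_general {V V' : Type*} [AddCommGroup V] [Module ℚ V] [AddCommGroup V'] [Module ℚ V']
    [FiniteDimensional ℚ V] [FiniteDimensional ℚ V'] (n : ℕ)
    (hV : Module.finrank ℚ V = n) (hV' : Module.finrank ℚ V' = n)
    (B : V →ₗ[ℚ] V' →ₗ[ℚ] ℚ)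
    (hB2 : ∀ y : V', (∀ x : V, B x y = 0) → y = 0)
    (l : ℚ) (hl : l ≠ 0)
    (f : V →ₗ[ℚ] V) (g : V' →ₗ[ℚ] V')
    (hfg : ∀ (x : V) (y : V'), B (f x) (g y) = l * B x y)
    (t : ℚ) (ht : t ≠ 0) :
    LinearMap.det (LinearMap.id - t • g) * LinearMap.det f =
      (-1 : ℚ) ^ n * l ^ n * t ^ n * LinearMap.det (LinearMap.id - (l * t)⁻¹ • f) := by
  have hB : Function.Injective B.flip :=
    LinearMap.ker_eq_bot.mp (LinearMap.separatingRight_iff_flip_ker_eq_bot.mp hB2)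
  let Φ : V' ≃ₗ[ℚ] Module.Dual ℚ V :=
    B.flip.linearEquivOfInjective hB (by rw [hV', Subspace.dual_finrank_eq, hV])
  have hhg : Φ.symm.conj f.dualMap ∘ₗ g = l • LinearMap.id := by
    ext y
    apply Φ.injective
    ext x
    simp [Φ, hfg]
  calc LinearMap.det (LinearMap.id - t • g) * LinearMap.det f
      = LinearMap.det (Φ.symm.conj f.dualMap) * LinearMap.det (LinearMap.id - t • g) := by
        rw [LinearMap.det_symm_conj_dualMap, mul_comm]
    _ = LinearMap.det (f - (l * t) • LinearMap.id) := by
        rw [LinearMap.det_mul_det_id_sub_smul_of_comp_eq_smul_id hhg,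
          LinearMap.det_symm_conj_dualMap_sub_smul]
    _ = _ := by
        rw [LinearMap.det_sub_smul_id_eq_pow_mul_det_id_sub_inv_smul f (mul_ne_zero hl ht), hV,
          neg_eq_neg_one_mul, mul_pow, mul_pow, ← mul_assoc]

/-- Lemma (Wójcik / Lemma 2.2 (2)): for a nondegenerate pairing `B : V × V' → ℚ` of
`n`-dimensional spaces and endomorphisms `f`, `g` with `B (f x) (g y) = λ • B x y`,
one has `det(id - t•g) * det f = (-1)^n λ^n t^n det(id - (λt)⁻¹•f)` for nonzero `t`. -/
theorem stmt_1 {V V' : Type*} [AddCommGroup V] [Module ℚ V] [AddCommGroup V'] [Module ℚ V']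
    [FiniteDimensional ℚ V] [FiniteDimensional ℚ V'] (n : ℕ)
    (hV : Module.finrank ℚ V = n) (hV' : Module.finrank ℚ V' = n)
    (B : V →ₗ[ℚ] V' →ₗ[ℚ] ℚ)
    (hB1 : ∀ x : V, (∀ y : V', B x y = 0) → x = 0)
    (hB2 : ∀ y : V', (∀ x : V, B x y = 0) → y = 0)
    (l : ℚ) (hl : l ≠ 0)
    (f : V →ₗ[ℚ] V) (g : V' →ₗ[ℚ] V')
    (hfg : ∀ (x : V) (y : V'), B (f x) (g y) = l * B x y)
    (t : ℚ) (ht : t ≠ 0) :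
    LinearMap.det (LinearMap.id - t • g) * LinearMap.det f =
      (-1 : ℚ) ^ n * l ^ n * t ^ n * LinearMap.det (LinearMap.id - (l * t)⁻¹ • f) :=
  stmt_1_general n hV hV' B hB2 l hl f g hfg t ht
end

section
/- Let V be a finite-dimensional vector space over ℚ and let u : V → V be a linear endomorphism. Then in the ring of formal power series ℚ[[z]] one has det(id_V − z·u) · exp( Σ_{m≥1} (tr(u^m)/m) · z^m ) = 1, where det(id_V − z·u) denotes the polynomial in z given by the determinant of id_V − z·u, regarded as a formal power series. -/
/-- The exponential of a formal power series over ℚ (the usual exponential series;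
for a series with zero constant term, `coeff n (S ^ k) = 0` for `k > n`, so the
finite sum below computes `Σ_{k ≥ 0} S^k / k!`). -/
noncomputable def expPS (S : PowerSeries ℚ) : PowerSeries ℚ :=
  PowerSeries.mk fun n =>
    ∑ k ∈ Finset.range (n + 1), (PowerSeries.coeff n (S ^ k)) / (Nat.factorial k : ℚ)

/-- `det(id - z • u)` as a polynomial in `z`: the reverse characteristic polynomial
of the endomorphism `u`. -/
noncomputable def detOneSubZ {V : Type*} [AddCommGroup V] [Module ℚ V] [FiniteDimensional ℚ V]
    (u : V →ₗ[ℚ] V) : Polynomial ℚ :=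
  Matrix.det (1 - (Polynomial.X : Polynomial ℚ) •
    ((LinearMap.toMatrix (Module.finBasis ℚ V) (Module.finBasis ℚ V) u).map Polynomial.C))

/-!
Let `A` be the matrix of `u`, `P = det (1 - z A)` and `S = Σ_{m ≥ 1} tr (Aᵐ) zᵐ / m`.
Jacobi's formula gives `P' = tr (adj (1 - z A) · (-A))`, and since
`(1 - z A) · Σ_m Aᵐ⁺¹ zᵐ = A` this is `-P · S'`. Hence `(P · exp S)' = 0`; as `P · exp S` has
constant term `1` and a power series over `ℚ` is determined by its derivative and constant
term, `P · exp S = 1`.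
-/

open PowerSeries Matrix

namespace Derivation

variable {R A : Type*} [CommRing R] [CommRing A] [Algebra R A]

theorem leibniz_prod {M : Type*} [AddCommGroup M] [Module A M] [Module R M]
    (D : Derivation R A M) {ι : Type*} [DecidableEq ι] (s : Finset ι) (f : ι → A) :
    D (∏ i ∈ s, f i) = ∑ i ∈ s, (∏ j ∈ s.erase i, f j) • D (f i) := by
  induction s using Finset.induction_on with
  | empty => simp
  | insert a s ha ih =>
    rw [Finset.prod_insert ha, leibniz, ih, Finset.smul_sum, Finset.sum_insert ha,
      Finset.erase_insert ha, add_comm]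
    congr 1
    refine Finset.sum_congr rfl fun i hi => ?_
    rw [Finset.erase_insert_of_ne (ne_of_mem_of_not_mem hi ha).symm,
      Finset.prod_insert fun h => ha (Finset.mem_of_mem_erase h), smul_smul]

variable {n : Type*} [Fintype n] [DecidableEq n]

theorem map_det_eq_sum_det_updateCol (D : Derivation R A A) (M : Matrix n n A) :
    D M.det = ∑ i, (M.updateCol i fun k => D (M k i)).det := by
  simp_rw [det_apply, map_sum, Units.smul_def, map_zsmul, leibniz_prod, smul_eq_mul]
  rw [Finset.sum_comm]
  refine Finset.sum_congr rfl fun σ _ => ?_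
  rw [Finset.smul_sum]
  refine Finset.sum_congr rfl fun i _ => ?_
  rw [← Finset.prod_erase_mul _ _ (Finset.mem_univ i)]
  congr 2
  · refine Finset.prod_congr rfl fun j hj => ?_
    rw [updateCol_apply, if_neg (Finset.ne_of_mem_erase hj)]
  · rw [updateCol_apply, if_pos rfl]

/-- **Jacobi's formula**. -/
theorem map_det (D : Derivation R A A) (M : Matrix n n A) :
    D M.det = trace (adjugate M * M.map D) := by
  rw [map_det_eq_sum_det_updateCol, trace]
  refine Finset.sum_congr rfl fun i _ => ?_
  rw [← cramer_apply, cramer_eq_adjugate_mulVec]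
  rfl

end Derivation

namespace PowerSeries

theorem coeff_pow_eq_zero_of_constantCoeff_eq_zero {R : Type*} [CommSemiring R] {S : R⟦X⟧}
    (hS : constantCoeff S = 0) {k n : ℕ} (h : n < k) : coeff n (S ^ k) = 0 :=
  X_pow_dvd_iff.mp (pow_dvd_pow_of_dvd (X_dvd_iff.mpr hS) k) n h

theorem expPS_eq_subst_exp {S : ℚ⟦X⟧} (hS : constantCoeff S = 0) :
    expPS S = (exp ℚ).subst S := by
  ext n
  rw [expPS, coeff_mk, coeff_subst' (HasSubst.of_constantCoeff_zero' hS),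
    finsum_eq_sum_of_support_subset (s := Finset.range (n + 1))]
  · refine Finset.sum_congr rfl fun k _ => ?_
    simp [div_eq_inv_mul]
  · intro k hk
    by_contra hkn
    simp only [Finset.coe_range, Set.mem_Iio, not_lt] at hkn
    exact hk (by
      simp only [coeff_pow_eq_zero_of_constantCoeff_eq_zero hS (show n < k by omega), smul_zero])

theorem derivative_expPS {S : ℚ⟦X⟧} (hS : constantCoeff S = 0) :
    d⁄dX ℚ (expPS S) = expPS S * d⁄dX ℚ S := by
  rw [expPS_eq_subst_exp hS, derivative_subst (HasSubst.of_constantCoeff_zero' hS),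
    derivative_exp]

theorem constantCoeff_expPS (S : ℚ⟦X⟧) : constantCoeff (expPS S) = 1 := by
  rw [← coeff_zero_eq_constantCoeff_apply, expPS, coeff_mk]
  simp

theorem mul_expPS_eq_one {f S : ℚ⟦X⟧} (hS : constantCoeff S = 0) (hf₀ : constantCoeff f = 1)
    (hf : d⁄dX ℚ f = -(f * d⁄dX ℚ S)) : f * expPS S = 1 := by
  refine derivative.ext ?_ (by rw [map_mul, constantCoeff_expPS, hf₀, map_one, mul_one])
  rw [Derivation.leibniz, derivative_expPS hS, hf, derivative_one, smul_eq_mul, smul_eq_mul]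
  ring

end PowerSeries

namespace Matrix

variable {R : Type*} [CommRing R] {n : Type*} [Fintype n] [DecidableEq n]

/-- The expansion `∑ₘ Aᵐ⁺¹ Xᵐ` of `A (1 - X A)⁻¹`. -/
noncomputable def resolventSeries (A : Matrix n n R) : Matrix n n R⟦X⟧ :=
  of fun i j => mk fun m => (A ^ (m + 1)) i j

theorem resolventSeries_eq (A : Matrix n n R) :
    resolventSeries A = A.map (C (R := R)) + (X : R⟦X⟧) • (A.map C * resolventSeries A) := by
  ext i j m
  cases m with
  | zero => simp [resolventSeries]
  | succ m =>
    simp [resolventSeries, mul_apply, pow_succ' A (m + 1)]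

theorem one_sub_X_smul_mul_resolventSeries (A : Matrix n n R) :
    (1 - (X : R⟦X⟧) • A.map C) * resolventSeries A = A.map C := by
  conv_rhs => rw [← add_sub_cancel_right (A.map C) ((X : R⟦X⟧) • (A.map C * resolventSeries A)),
    ← resolventSeries_eq]
  rw [sub_mul, one_mul, smul_mul]

theorem trace_resolventSeries (A : Matrix n n R) :
    trace (resolventSeries A) = mk fun m => trace (A ^ (m + 1)) := by
  ext m
  simp [trace, resolventSeries]

theorem coe_charpolyRev (A : Matrix n n R) :
    (A.charpolyRev : R⟦X⟧) = det (1 - (X : R⟦X⟧) • A.map C) := by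
  rw [charpolyRev, ← Polynomial.coeToPowerSeries.ringHom_apply, RingHom.map_det]
  congr 1
  ext i j : 1
  simp only [RingHom.mapMatrix_apply, Matrix.map_apply, Matrix.sub_apply, Matrix.smul_apply,
    Matrix.one_apply, smul_eq_mul, map_sub, map_mul, map_one,
    Polynomial.coeToPowerSeries.ringHom_apply, Polynomial.coe_X, Polynomial.coe_C]

theorem constantCoeff_charpolyRev (A : Matrix n n R) :
    constantCoeff (A.charpolyRev : R⟦X⟧) = 1 := by
  rw [← coeff_zero_eq_constantCoeff_apply, Polynomial.coeff_coe,
    Polynomial.coeff_zero_eq_eval_zero, eval_charpolyRev]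

theorem derivative_charpolyRev (A : Matrix n n R) :
    d⁄dX R (A.charpolyRev : R⟦X⟧) = -(A.charpolyRev * mk fun m => trace (A ^ (m + 1))) := by
  rw [coe_charpolyRev]
  set M := 1 - (X : R⟦X⟧) • A.map C
  have hM : M.map (d⁄dX R) = -(M * resolventSeries A) := by
    rw [one_sub_X_smul_mul_resolventSeries]
    ext i j : 1
    simp [M, one_apply, apply_ite]
  rw [Derivation.map_det, hM, mul_neg, trace_neg, ← Matrix.mul_assoc, adjugate_mul, smul_mul,
    one_mul, trace_smul, trace_resolventSeries, smul_eq_mul]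

theorem charpolyRev_mul_expPS (A : Matrix n n ℚ) :
    (A.charpolyRev : ℚ⟦X⟧) * expPS (mk fun m => if m = 0 then 0 else trace (A ^ m) / m) = 1 := by
  refine mul_expPS_eq_one (by simp [← coeff_zero_eq_constantCoeff_apply])
    (constantCoeff_charpolyRev A) ?_
  rw [derivative_charpolyRev]
  congr 2
  ext m
  rw [coeff_derivative, coeff_mk, coeff_mk, if_neg m.succ_ne_zero, Nat.cast_succ,
    div_mul_cancel₀ _ (Nat.cast_add_one_ne_zero m)]

end Matrix

/-- In `ℚ[[z]]`, `det(id - z•u) · exp( Σ_{m ≥ 1} tr(u^m)/m · z^m ) = 1`. -/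
theorem stmt_3 {V : Type*} [AddCommGroup V] [Module ℚ V] [FiniteDimensional ℚ V]
    (u : V →ₗ[ℚ] V) :
    (↑(detOneSubZ u) : PowerSeries ℚ) *
      expPS (PowerSeries.mk fun m =>
        if m = 0 then 0 else LinearMap.trace ℚ V (u ^ m) / (m : ℚ)) = 1 := by
  set b := Module.finBasis ℚ V
  have htrace (m : ℕ) : LinearMap.trace ℚ V (u ^ m) = trace (LinearMap.toMatrix b b u ^ m) := by
    rw [LinearMap.trace_eq_matrix_trace ℚ b, LinearMap.toMatrix_pow]
  simp_rw [htrace]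
  exact charpolyRev_mul_expPS _
end

section
/- Let n be an odd positive integer. For each i = 0, …, n−1 let V_i and W_i be finite-dimensional vector spaces over ℚ, and suppose given nondegenerate bilinear pairings B_i : V_i × W_{n−1−i} → ℚ. Let λ be a nonzero rational number and let f_i : V_i → V_i and g_i : W_i → W_i be linear endomorphisms such that B_i(f_i(x), g_{n−1−i}(y)) = λ·B_i(x, y) for all i, all x ∈ V_i and all y ∈ W_{n−1−i}. Set χ = Σ_{i=0}^{n−1} (−1)^i · dim V_i. Then for every nonzero rational number z such that det(id − z·f_i), det(id − z·g_i), det(id − (λz)⁻¹·f_i) and det(id − (λz)⁻¹·g_i) are all nonzero, one has Π_{i=0}^{n−1} det(id − (λz)⁻¹·f_i)^{(−1)^{i+1}} · Π_{i=0}^{n−1} det(id − (λz)⁻¹·g_i)^{(−1)^{i+1}} = λ^χ · z^{2χ} · Π_{i=0}^{n−1} det(id − z·f_i)^{(−1)^{i+1}} · Π_{i=0}^{n−1} det(id − z·g_i)^{(−1)^{i+1}}, where the signed exponents and the powers of λ and z are taken as integer powers (zpow) in ℚ. -/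
open Module LinearMap

private lemma detDualMap {K V : Type*} [Field K] [AddCommGroup V] [Module K V]
    [FiniteDimensional K V] (f : V →ₗ[K] V) :
    LinearMap.det (f.dualMap) = LinearMap.det f := by
  let b := Module.finBasis K V
  rw [← LinearMap.det_toMatrix b.dualBasis f.dualMap, ← LinearMap.det_toMatrix b f]
  show Matrix.det (LinearMap.toMatrix b.dualBasis b.dualBasis
      (Module.Dual.transpose (R := K) f)) = _
  rw [LinearMap.toMatrix_transpose, Matrix.det_transpose]

private lemma pairing_core {V W : Type*} [AddCommGroup V] [Module ℚ V] [FiniteDimensional ℚ V]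
    [AddCommGroup W] [Module ℚ W] [FiniteDimensional ℚ W]
    (B : V →ₗ[ℚ] W →ₗ[ℚ] ℚ)
    (hB1 : ∀ x : V, (∀ y, B x y = 0) → x = 0)
    (hB2 : ∀ y : W, (∀ x, B x y = 0) → y = 0)
    (l : ℚ) (f : V →ₗ[ℚ] V) (g : W →ₗ[ℚ] W)
    (hfg : ∀ x y, B (f x) (g y) = l * B x y) :
    Module.finrank ℚ V = Module.finrank ℚ W ∧
    LinearMap.det f * LinearMap.det g = l ^ Module.finrank ℚ V ∧
    ∀ a : ℚ, l * a ≠ 0 →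
      LinearMap.det g * LinearMap.det (LinearMap.id - a • f)
        = (-(l * a)) ^ Module.finrank ℚ V *
          LinearMap.det (LinearMap.id - (l * a)⁻¹ • g) := by
  have hinj : Function.Injective B := by
    rw [← LinearMap.ker_eq_bot, LinearMap.ker_eq_bot']
    intro x hx
    exact hB1 x fun y => congrFun (congrArg DFunLike.coe hx) y
  have hinj2 : Function.Injective B.flip := by
    rw [← LinearMap.ker_eq_bot, LinearMap.ker_eq_bot']
    intro y hy
    exact hB2 y fun x => congrFun (congrArg DFunLike.coe hy) x
  have hd : Module.finrank ℚ V = Module.finrank ℚ W := by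
    have h1 : Module.finrank ℚ V ≤ Module.finrank ℚ (Module.Dual ℚ W) :=
      LinearMap.finrank_le_finrank_of_injective hinj
    have h2 : Module.finrank ℚ W ≤ Module.finrank ℚ (Module.Dual ℚ V) :=
      LinearMap.finrank_le_finrank_of_injective hinj2
    rw [Subspace.dual_finrank_eq] at h1 h2
    omega
  have hd' : Module.finrank ℚ V = Module.finrank ℚ (Module.Dual ℚ W) := by
    rw [Subspace.dual_finrank_eq]; exact hd
  let e : V ≃ₗ[ℚ] Module.Dual ℚ W := B.linearEquivOfInjective hinj hd'
  have he : ∀ x : V, e x = B x := fun x => B.linearEquivOfInjective_apply hinj hd' x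
  set G' : V →ₗ[ℚ] V := e.symm.toLinearMap ∘ₗ g.dualMap ∘ₗ e.toLinearMap with hG'
  have hkey : G' ∘ₗ f = l • LinearMap.id := by
    ext x
    have h0 : g.dualMap (e (f x)) = l • e x := by
      ext y
      simp only [LinearMap.dualMap_apply', he, LinearMap.smul_apply, smul_eq_mul,
        LinearMap.comp_apply]
      exact hfg x y
    simp only [LinearMap.comp_apply, hG', LinearEquiv.coe_coe, LinearMap.coe_comp,
      Function.comp_apply, h0, map_smul, LinearEquiv.symm_apply_apply,
      LinearMap.smul_apply, LinearMap.id_apply]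
  have hdetconj : ∀ h : Module.Dual ℚ W →ₗ[ℚ] Module.Dual ℚ W,
      LinearMap.det (e.symm.toLinearMap ∘ₗ h ∘ₗ e.toLinearMap) = LinearMap.det h := by
    intro h
    conv_rhs => rw [← LinearMap.det_conj h e.symm, LinearEquiv.symm_symm]
  have hdetG' : LinearMap.det G' = LinearMap.det g := by
    rw [hG', hdetconj, detDualMap]
  have hb : LinearMap.det G' * LinearMap.det f = l ^ Module.finrank ℚ V := by
    rw [← LinearMap.det_comp, hkey, LinearMap.det_smul, LinearMap.det_id, mul_one]
  refine ⟨hd, by rw [mul_comm, ← hdetG']; exact hb, ?_⟩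
  intro a hla
  have hcomp : G' ∘ₗ (LinearMap.id - a • f)
      = (-(l * a)) • (LinearMap.id - (l * a)⁻¹ • G') := by
    have h1 : G' ∘ₗ (a • f) = (l * a) • LinearMap.id := by
      rw [LinearMap.comp_smul, hkey, smul_smul, mul_comm]
    have h2 : (-(l * a)) • ((l * a)⁻¹ • G') = (-1 : ℚ) • G' := by
      rw [smul_smul, neg_mul, mul_inv_cancel₀ hla]
    rw [LinearMap.comp_sub, LinearMap.comp_id, h1, smul_sub, h2, neg_smul, neg_smul, one_smul,
      sub_neg_eq_add]
    abel
  have hdualid : ∀ c : ℚ, (LinearMap.id - c • g).dualMap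
      = LinearMap.id - c • g.dualMap := by
    intro c
    ext φ y
    simp [LinearMap.dualMap_apply']
  have hconjsub : ∀ c : ℚ, (LinearMap.id - c • G' : V →ₗ[ℚ] V)
      = e.symm.toLinearMap ∘ₗ (LinearMap.id - c • g.dualMap) ∘ₗ e.toLinearMap := by
    intro c
    ext x
    simp [hG', map_sub, map_smul]
  have hdetsub : LinearMap.det (LinearMap.id - (l * a)⁻¹ • G')
      = LinearMap.det (LinearMap.id - (l * a)⁻¹ • g) := by
    rw [hconjsub, hdetconj, ← hdualid, detDualMap]
  calc LinearMap.det g * LinearMap.det (LinearMap.id - a • f)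
      = LinearMap.det (G' ∘ₗ (LinearMap.id - a • f)) := by
        rw [LinearMap.det_comp, hdetG']
    _ = (-(l * a)) ^ Module.finrank ℚ V * LinearMap.det (LinearMap.id - (l * a)⁻¹ • G') := by
        rw [hcomp, LinearMap.det_smul]
    _ = _ := by rw [hdetsub]

private lemma prod_zpow_const {α : Type*} (s : Finset α) {b : ℚ} (hb : b ≠ 0) (e : α → ℤ) :
    ∏ i ∈ s, b ^ e i = b ^ (∑ i ∈ s, e i) := by
  induction s using Finset.cons_induction with
  | empty => simp
  | cons a s ha ih => rw [Finset.prod_cons, Finset.sum_cons, zpow_add₀ hb, ih]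

private lemma rev_sign {n : ℕ} (hodd : Odd n) (i : Fin n) :
    ((-1 : ℤ)) ^ ((i.rev : ℕ) + 1) = (-1) ^ ((i : ℕ) + 1) := by
  have hv : (i.rev : ℕ) = n - 1 - (i : ℕ) := by
    simp [Fin.rev]; omega
  obtain ⟨k, hk⟩ := hodd
  have hi := i.isLt
  rcases Nat.even_or_odd ((i : ℕ) + 1) with h | h
  · obtain ⟨m, hm⟩ := h
    have h' : Even ((i.rev : ℕ) + 1) := ⟨k + 1 - m, by omega⟩
    rw [h'.neg_one_pow, Even.neg_one_pow ⟨m, hm⟩]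
  · obtain ⟨m, hm⟩ := h
    have h' : Odd ((i.rev : ℕ) + 1) := ⟨k - m, by omega⟩
    rw [h'.neg_one_pow, Odd.neg_one_pow ⟨m, hm⟩]

/-- Algebraic core of the main functional equation, `n` odd:
`Π det(id-(λz)⁻¹f_i)^{(-1)^{i+1}} · Π det(id-(λz)⁻¹g_i)^{(-1)^{i+1}}
  = λ^χ z^{2χ} · Π det(id-zf_i)^{(-1)^{i+1}} · Π det(id-zg_i)^{(-1)^{i+1}}`.
Here `i.rev` denotes `n - 1 - i`. -/
theorem stmt_6 (n : ℕ) (hn : 0 < n) (hodd : Odd n)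
    (V W : Fin n → Type*)
    [∀ i, AddCommGroup (V i)] [∀ i, Module ℚ (V i)] [∀ i, FiniteDimensional ℚ (V i)]
    [∀ i, AddCommGroup (W i)] [∀ i, Module ℚ (W i)] [∀ i, FiniteDimensional ℚ (W i)]
    (B : ∀ i, V i →ₗ[ℚ] W i.rev →ₗ[ℚ] ℚ)
    (hB1 : ∀ i, ∀ x : V i, (∀ y, B i x y = 0) → x = 0)
    (hB2 : ∀ i, ∀ y : W i.rev, (∀ x, B i x y = 0) → y = 0)
    (l : ℚ) (hl : l ≠ 0)
    (f : ∀ i, V i →ₗ[ℚ] V i) (g : ∀ i, W i →ₗ[ℚ] W i)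
    (hfg : ∀ i, ∀ (x : V i) (y : W i.rev), B i (f i x) (g i.rev y) = l * B i x y)
    (χ : ℤ) (hχ : χ = ∑ i : Fin n, (-1 : ℤ) ^ (i : ℕ) * (Module.finrank ℚ (V i) : ℤ))
    (z : ℚ) (hz : z ≠ 0)
    (hdf : ∀ i, LinearMap.det (LinearMap.id - z • f i) ≠ 0)
    (hdg : ∀ i, LinearMap.det (LinearMap.id - z • g i) ≠ 0)
    (hdf' : ∀ i, LinearMap.det (LinearMap.id - (l * z)⁻¹ • f i) ≠ 0)
    (hdg' : ∀ i, LinearMap.det (LinearMap.id - (l * z)⁻¹ • g i) ≠ 0) :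
    (∏ i : Fin n, LinearMap.det (LinearMap.id - (l * z)⁻¹ • f i) ^ ((-1 : ℤ) ^ ((i : ℕ) + 1))) *
    (∏ i : Fin n, LinearMap.det (LinearMap.id - (l * z)⁻¹ • g i) ^ ((-1 : ℤ) ^ ((i : ℕ) + 1)))
    = l ^ χ * z ^ (2 * χ) *
      (∏ i : Fin n, LinearMap.det (LinearMap.id - z • f i) ^ ((-1 : ℤ) ^ ((i : ℕ) + 1))) *
      (∏ i : Fin n, LinearMap.det (LinearMap.id - z • g i) ^ ((-1 : ℤ) ^ ((i : ℕ) + 1))) := by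
  have hlz : l * z ≠ 0 := mul_ne_zero hl hz
  set d : Fin n → ℕ := fun i => Module.finrank ℚ (V i) with hd_def
  set P : Fin n → ℚ := fun i => LinearMap.det (LinearMap.id - (l * z)⁻¹ • f i) with hPdef
  set Q : Fin n → ℚ := fun i => LinearMap.det (LinearMap.id - (l * z)⁻¹ • g i) with hQdef
  set P' : Fin n → ℚ := fun i => LinearMap.det (LinearMap.id - z • f i) with hP'def
  set Q' : Fin n → ℚ := fun i => LinearMap.det (LinearMap.id - z • g i) with hQ'def
  have hcore := fun i => pairing_core (B i) (hB1 i) (hB2 i) l (f i) (g i.rev) (hfg i)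
  have hcore2 := fun i => pairing_core (B i).flip
      (fun y hy => hB2 i y (fun x => by simpa using hy x))
      (fun x hx => hB1 i x (fun y => by simpa using hx y))
      l (g i.rev) (f i) (fun y x => by simpa using hfg i x y)
  have hdim : ∀ i, Module.finrank ℚ (W i.rev) = d i := fun i => ((hcore i).1).symm
  have hFG : ∀ i, LinearMap.det (f i) * LinearMap.det (g i.rev) = l ^ d i :=
    fun i => (hcore i).2.1
  have hrel1 : ∀ i, LinearMap.det (g i.rev) * P' i = (-(l * z)) ^ d i * Q i.rev :=
    fun i => (hcore i).2.2 z hlz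
  have hrel2 : ∀ i, LinearMap.det (f i) * Q' i.rev = (-(l * z)) ^ d i * P i := by
    intro i
    have h := (hcore2 i).2.2 z hlz
    rwa [hdim i] at h
  have hlpow : ∀ i : Fin n, (l : ℚ) ^ d i ≠ 0 := fun i => pow_ne_zero _ hl
  have base : ∀ i, P' i * Q' i.rev = l ^ d i * z ^ (2 * d i) * (P i * Q i.rev) := by
    intro i
    have hm2 : ((-(l * z)) ^ d i) ^ 2 = l ^ (2 * d i) * z ^ (2 * d i) := by
      rw [← pow_mul, mul_comm (d i) 2, pow_mul, neg_sq, mul_pow, mul_pow, ← pow_mul, ← pow_mul]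
    have key : l ^ d i * (P' i * Q' i.rev)
        = ((-(l * z)) ^ d i) ^ 2 * (P i * Q i.rev) := by
      linear_combination (LinearMap.det (f i) * Q' i.rev) * hrel1 i
        + ((-(l * z)) ^ d i * Q i.rev) * hrel2 i - (P' i * Q' i.rev) * hFG i
    apply mul_left_cancel₀ (hlpow i)
    rw [key, hm2]
    ring
  have keypt : ∀ i : Fin n,
      P i ^ ((-1 : ℤ) ^ ((i : ℕ) + 1)) * Q i.rev ^ ((-1 : ℤ) ^ ((i : ℕ) + 1))
        = l ^ ((-1 : ℤ) ^ (i : ℕ) * (d i : ℤ))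
          * z ^ (2 * ((-1 : ℤ) ^ (i : ℕ) * (d i : ℤ)))
          * (P' i ^ ((-1 : ℤ) ^ ((i : ℕ) + 1)) * Q' i.rev ^ ((-1 : ℤ) ^ ((i : ℕ) + 1))) := by
    intro i
    have hb := base i
    have hp := hdf' i
    have hq := hdg' i.rev
    have hp' := hdf i
    have hq' := hdg i.rev
    rcases Nat.even_or_odd (i : ℕ) with h | h
    · have hs : ((-1 : ℤ)) ^ ((i : ℕ) + 1) = -1 := Odd.neg_one_pow h.add_one
      have hc : ((-1 : ℤ)) ^ ((i : ℕ)) = 1 := h.neg_one_pow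
      have he1 : ((1 : ℤ) * (d i : ℤ)) = ((d i : ℕ) : ℤ) := by push_cast; ring
      have he2 : (2 * ((d i : ℕ) : ℤ)) = ((2 * d i : ℕ) : ℤ) := by push_cast; ring
      rw [hs, hc, he1, he2, zpow_natCast, zpow_natCast, zpow_neg_one, zpow_neg_one,
        zpow_neg_one, zpow_neg_one]
      rw [← mul_inv, ← mul_inv, hb, mul_inv, mul_inv]
      field_simp
    · have hs : ((-1 : ℤ)) ^ ((i : ℕ) + 1) = 1 := Even.neg_one_pow h.add_one
      have hc : ((-1 : ℤ)) ^ ((i : ℕ)) = -1 := h.neg_one_pow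
      have he1 : ((-1 : ℤ) * (d i : ℤ)) = -((d i : ℕ) : ℤ) := by push_cast; ring
      have he2 : (2 * -((d i : ℕ) : ℤ)) = -((2 * d i : ℕ) : ℤ) := by push_cast; ring
      rw [hs, hc, he1, he2, zpow_neg, zpow_neg, zpow_natCast, zpow_natCast,
        zpow_one, zpow_one, zpow_one, zpow_one]
      rw [hb]
      field_simp
  have hrevQ : (∏ i : Fin n, Q i ^ ((-1 : ℤ) ^ ((i : ℕ) + 1)))
      = ∏ i : Fin n, Q i.rev ^ ((-1 : ℤ) ^ ((i : ℕ) + 1)) := by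
    rw [← Equiv.prod_comp Fin.revPerm (fun j : Fin n => Q j ^ ((-1 : ℤ) ^ ((j : ℕ) + 1)))]
    exact Finset.prod_congr rfl fun i _ => by
      show Q (Fin.revPerm i) ^ ((-1 : ℤ) ^ (((Fin.revPerm i : Fin n) : ℕ) + 1)) = _
      rw [show (Fin.revPerm i : Fin n) = i.rev from rfl, rev_sign hodd i]
  have hrevQ' : (∏ i : Fin n, Q' i ^ ((-1 : ℤ) ^ ((i : ℕ) + 1)))
      = ∏ i : Fin n, Q' i.rev ^ ((-1 : ℤ) ^ ((i : ℕ) + 1)) := by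
    rw [← Equiv.prod_comp Fin.revPerm (fun j : Fin n => Q' j ^ ((-1 : ℤ) ^ ((j : ℕ) + 1)))]
    exact Finset.prod_congr rfl fun i _ => by
      show Q' (Fin.revPerm i) ^ ((-1 : ℤ) ^ (((Fin.revPerm i : Fin n) : ℕ) + 1)) = _
      rw [show (Fin.revPerm i : Fin n) = i.rev from rfl, rev_sign hodd i]
  have hsum : (∑ i : Fin n, (-1 : ℤ) ^ (i : ℕ) * (d i : ℤ)) = χ := hχ.symm
  calc (∏ i : Fin n, P i ^ ((-1 : ℤ) ^ ((i : ℕ) + 1)))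
        * (∏ i : Fin n, Q i ^ ((-1 : ℤ) ^ ((i : ℕ) + 1)))
      = ∏ i : Fin n, (P i ^ ((-1 : ℤ) ^ ((i : ℕ) + 1))
          * Q i.rev ^ ((-1 : ℤ) ^ ((i : ℕ) + 1))) := by
        rw [hrevQ, ← Finset.prod_mul_distrib]
    _ = ∏ i : Fin n, (l ^ ((-1 : ℤ) ^ (i : ℕ) * (d i : ℤ))
          * z ^ (2 * ((-1 : ℤ) ^ (i : ℕ) * (d i : ℤ)))
          * (P' i ^ ((-1 : ℤ) ^ ((i : ℕ) + 1)) * Q' i.rev ^ ((-1 : ℤ) ^ ((i : ℕ) + 1)))) :=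
        Finset.prod_congr rfl fun i _ => keypt i
    _ = (∏ i : Fin n, l ^ ((-1 : ℤ) ^ (i : ℕ) * (d i : ℤ)))
          * (∏ i : Fin n, z ^ (2 * ((-1 : ℤ) ^ (i : ℕ) * (d i : ℤ))))
          * ((∏ i : Fin n, P' i ^ ((-1 : ℤ) ^ ((i : ℕ) + 1)))
            * (∏ i : Fin n, Q' i.rev ^ ((-1 : ℤ) ^ ((i : ℕ) + 1)))) := by
        rw [Finset.prod_mul_distrib, Finset.prod_mul_distrib, Finset.prod_mul_distrib]
    _ = l ^ χ * z ^ (2 * χ)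
          * ((∏ i : Fin n, P' i ^ ((-1 : ℤ) ^ ((i : ℕ) + 1)))
            * (∏ i : Fin n, Q' i ^ ((-1 : ℤ) ^ ((i : ℕ) + 1)))) := by
        rw [prod_zpow_const _ hl, prod_zpow_const _ hz, ← Finset.mul_sum, hsum, ← hrevQ']
    _ = l ^ χ * z ^ (2 * χ) * (∏ i : Fin n, P' i ^ ((-1 : ℤ) ^ ((i : ℕ) + 1)))
          * (∏ i : Fin n, Q' i ^ ((-1 : ℤ) ^ ((i : ℕ) + 1))) := by ring
end

section
/- Let n be an odd positive integer. For each i = 0, …, n−1 let V_i be a finite-dimensional vector space over ℚ, and suppose given nondegenerate bilinear pairings B_i : V_i × V_{n−1−i} → ℚ. Let λ be a nonzero rational number and let f_i : V_i → V_i be linear endomorphisms such that B_i(f_i(x), f_{n−1−i}(y)) = λ·B_i(x, y) for all i, all x ∈ V_i and all y ∈ V_{n−1−i}. Set χ = Σ_{i=0}^{n−1} (−1)^i · dim V_i and, for a nonzero rational z with all det(id − z·f_i) nonzero, set Z(z) = Π_{i=0}^{n−1} det(id − z·f_i)^{(−1)^{i+1}}. Then for every nonzero rational number z such that all det(id − z·f_i)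 and all det(id − (λz)⁻¹·f_i) are nonzero, one has Z(1/(λz))² = λ^χ · z^{2χ} · Z(z)², with all signed exponents and powers taken as integer powers (zpow) in ℚ. -/
open Module

private lemma aux_det_dualMap {V : Type*} [AddCommGroup V] [Module ℚ V]
    [FiniteDimensional ℚ V] (g : V →ₗ[ℚ] V) :
    LinearMap.det (g.dualMap) = LinearMap.det g := by
  classical
  let b := Module.finBasis ℚ V
  rw [← LinearMap.det_toMatrix b g, ← LinearMap.det_toMatrix b.dualBasis g.dualMap,
    ← Matrix.det_transpose (LinearMap.toMatrix b b g)]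
  congr 1
  ext i j
  rw [LinearMap.toMatrix_apply, Matrix.transpose_apply, LinearMap.toMatrix_apply]
  simp [LinearMap.dualMap_apply, Basis.dualBasis_repr, Basis.dualBasis_apply]

private lemma aux_zpow_sum {ι : Type*} {a : ℚ} (ha : a ≠ 0) (s : Finset ι) (k : ι → ℤ) :
    a ^ (∑ i ∈ s, k i) = ∏ i ∈ s, a ^ k i := by
  classical
  refine Finset.induction_on s (by simp) ?_
  intro i t hit ih
  rw [Finset.sum_insert hit, Finset.prod_insert hit, zpow_add₀ ha, ih]

/-- Algebraic form of the boundaryless case of the main theorem (`n` odd):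
with `Z(z) = Π det(id - z f_i)^{(-1)^{i+1}}`, one has `Z(1/(λz))² = λ^χ z^{2χ} Z(z)²`.
Here `i.rev` denotes `n - 1 - i`. -/
theorem stmt_9 (n : ℕ) (hn : 0 < n) (hodd : Odd n)
    (V : Fin n → Type*)
    [∀ i, AddCommGroup (V i)] [∀ i, Module ℚ (V i)] [∀ i, FiniteDimensional ℚ (V i)]
    (B : ∀ i, V i →ₗ[ℚ] V i.rev →ₗ[ℚ] ℚ)
    (hB1 : ∀ i, ∀ x : V i, (∀ y, B i x y = 0) → x = 0)
    (hB2 : ∀ i, ∀ y : V i.rev, (∀ x, B i x y = 0) → y = 0)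
    (l : ℚ) (hl : l ≠ 0)
    (f : ∀ i, V i →ₗ[ℚ] V i)
    (hff : ∀ i, ∀ (x : V i) (y : V i.rev), B i (f i x) (f i.rev y) = l * B i x y)
    (χ : ℤ) (hχ : χ = ∑ i : Fin n, (-1 : ℤ) ^ (i : ℕ) * (Module.finrank ℚ (V i) : ℤ))
    (z : ℚ) (hz : z ≠ 0)
    (hdf : ∀ i, LinearMap.det (LinearMap.id - z • f i) ≠ 0)
    (hdf' : ∀ i, LinearMap.det (LinearMap.id - (l * z)⁻¹ • f i) ≠ 0) :
    (∏ i : Fin n, LinearMap.det (LinearMap.id - (l * z)⁻¹ • f i) ^ ((-1 : ℤ) ^ ((i : ℕ) + 1))) ^ 2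
    = l ^ χ * z ^ (2 * χ) *
      (∏ i : Fin n, LinearMap.det (LinearMap.id - z • f i) ^ ((-1 : ℤ) ^ ((i : ℕ) + 1))) ^ 2 := by
  classical
  set d : Fin n → ℕ := fun i => finrank ℚ (V i) with hd_def
  set a : Fin n → ℚ := fun i => LinearMap.det (LinearMap.id - z • f i) with ha_def
  set b : Fin n → ℚ := fun i => LinearMap.det (LinearMap.id - (l * z)⁻¹ • f i) with hb_def
  set c : Fin n → ℚ := fun i => LinearMap.det (f i) with hc_def
  set t : Fin n → ℤ := fun i => (-1 : ℤ) ^ (i : ℕ) with ht_def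
  set s : Fin n → ℤ := fun i => (-1 : ℤ) ^ ((i : ℕ) + 1) with hs_def
  -- parity facts
  obtain ⟨k, hk⟩ := hodd
  have hrev : ∀ i : Fin n, (i.rev : ℕ) = 2 * k - i := by
    intro i
    have := i.isLt
    rw [Fin.val_rev]
    omega
  have hsignt : ∀ i : Fin n, t i.rev = t i := by
    intro i
    have hle : (i : ℕ) ≤ 2 * k := by have := i.isLt; omega
    simp only [ht_def, hrev]
    rcases Nat.even_or_odd (i : ℕ) with he | ho
    · rw [he.neg_one_pow, ((Nat.even_sub hle).mpr (iff_of_true (even_two_mul k) he)).neg_one_pow]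
    · rw [ho.neg_one_pow, (Nat.Even.sub_odd hle (even_two_mul k) ho).neg_one_pow]
  have hsigns : ∀ i : Fin n, s i.rev = s i := by
    intro i
    simp only [hs_def, pow_succ]
    have := hsignt i
    simp only [ht_def] at this
    rw [this]
  have hst : ∀ i : Fin n, s i = -(t i) := by
    intro i
    simp only [hs_def, ht_def, pow_succ, mul_neg_one]
  -- reindexing along rev
  have hrevprod : ∀ g : Fin n → ℚ, (∏ i : Fin n, g i.rev) = ∏ i : Fin n, g i := by
    intro g
    exact Fintype.prod_bijective Fin.rev Fin.rev_involutive.bijective _ _ (fun i => rfl)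
  -- injectivity of the pairings
  have hinj : ∀ i : Fin n, Function.Injective (B i) := by
    intro i
    refine (injective_iff_map_eq_zero (B i)).2 (fun x hx => hB1 i x fun y => ?_)
    rw [hx]; rfl
  have hinj2 : ∀ i : Fin n, Function.Injective ((B i).flip) := by
    intro i
    refine (injective_iff_map_eq_zero ((B i).flip)).2 (fun y hy => hB2 i y fun x => ?_)
    have := LinearMap.congr_fun hy x
    simpa using this
  have hdim : ∀ i : Fin n, d i.rev = d i := by
    intro i
    have h1 : d i ≤ finrank ℚ (Module.Dual ℚ (V i.rev)) :=
      LinearMap.finrank_le_finrank_of_injective (hinj i)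
    have h2 : d i.rev ≤ finrank ℚ (Module.Dual ℚ (V i)) :=
      LinearMap.finrank_le_finrank_of_injective (hinj2 i)
    rw [Subspace.dual_finrank_eq] at h1 h2
    simp only [hd_def] at *
    omega
  have hbij : ∀ i : Fin n, Function.Bijective (B i) := by
    intro i
    refine ⟨hinj i, ?_⟩
    have heq : finrank ℚ (V i) = finrank ℚ (Module.Dual ℚ (V i.rev)) := by
      rw [Subspace.dual_finrank_eq]
      exact (hdim i).symm
    exact (LinearMap.injective_iff_surjective_of_finrank_eq_finrank heq).1 (hinj i)
  -- the conjugated dual endomorphisms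
  set e : ∀ i, V i ≃ₗ[ℚ] Module.Dual ℚ (V i.rev) :=
    fun i => LinearEquiv.ofBijective (B i) (hbij i) with he_def
  set h : ∀ i, V i →ₗ[ℚ] V i :=
    fun i => (e i).symm.toLinearMap ∘ₗ (f i.rev).dualMap ∘ₗ (e i).toLinearMap with hh_def
  have hh1 : ∀ i : Fin n, (h i) ∘ₗ f i = l • LinearMap.id := by
    intro i
    ext x
    apply (e i).injective
    apply LinearMap.ext
    intro y
    simp only [hh_def, LinearMap.comp_apply, LinearMap.smul_apply, LinearMap.id_apply,
      LinearEquiv.coe_coe, LinearEquiv.apply_symm_apply, LinearMap.dualMap_apply,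
      map_smul]
    show (B i) (f i x) (f i.rev y) = (l • ((B i) x)) y
    rw [hff i x y]
    simp
  have hdeth : ∀ i : Fin n, LinearMap.det (h i) = c i.rev := by
    intro i
    have hconj := LinearMap.det_conj ((f i.rev).dualMap) (e i).symm
    rw [LinearEquiv.symm_symm] at hconj
    simp only [hh_def]
    rw [hconj, aux_det_dualMap]
  have hh1x : ∀ i : Fin n, ∀ x : V i, h i (f i x) = l • x := by
    intro i x
    have := LinearMap.congr_fun (hh1 i) x
    simpa using this
  have hh2 : ∀ i : Fin n, (h i) ∘ₗ (LinearMap.id - (l * z)⁻¹ • f i) = (-z⁻¹) • (LinearMap.id - z • h i) := by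
    intro i
    ext x
    simp only [LinearMap.comp_apply, LinearMap.sub_apply, LinearMap.smul_apply,
      LinearMap.id_apply, map_sub, map_smul, hh1x i x]
    rw [smul_smul, smul_sub, smul_smul]
    have h1 : (l * z)⁻¹ * l = z⁻¹ := by field_simp
    have h2 : -z⁻¹ * z = -1 := by field_simp
    rw [h1, h2]
    module
  have hdualsub : ∀ i : Fin n, LinearMap.id - z • h i =
      (e i).symm.toLinearMap ∘ₗ (LinearMap.id - z • (f i.rev).dualMap) ∘ₗ (e i).toLinearMap := by
    intro i
    ext x
    simp [hh_def, map_sub, map_smul, LinearMap.sub_apply, LinearMap.smul_apply]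
  have hdual2 : ∀ i : Fin n, LinearMap.id - z • (f i.rev).dualMap =
      (LinearMap.id - z • f i.rev).dualMap := by
    intro i
    apply LinearMap.ext
    intro φ
    apply LinearMap.ext
    intro y
    simp [LinearMap.dualMap_apply, map_sub, map_smul]
  have hdetid : ∀ i : Fin n, LinearMap.det (LinearMap.id - z • h i) = a i.rev := by
    intro i
    rw [hdualsub i]
    have hconj := LinearMap.det_conj (LinearMap.id - z • (f i.rev).dualMap) (e i).symm
    rw [LinearEquiv.symm_symm] at hconj
    rw [hconj, hdual2 i, aux_det_dualMap]
  -- the two key determinant identities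
  have key1 : ∀ i : Fin n, c i.rev * c i = l ^ (d i : ℤ) := by
    intro i
    have hc := congrArg LinearMap.det (hh1 i)
    rw [LinearMap.det_comp, LinearMap.det_smul, LinearMap.det_id, mul_one, hdeth i] at hc
    rw [hc, zpow_natCast]
  have key2 : ∀ i : Fin n, c i.rev * b i = (-z⁻¹) ^ (d i) * a i.rev := by
    intro i
    have hc := congrArg LinearMap.det (hh2 i)
    rw [LinearMap.det_comp, LinearMap.det_smul, hdeth i, hdetid i] at hc
    exact hc
  have hcne : ∀ i : Fin n, c i ≠ 0 := by
    intro i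
    intro h0
    have := key1 i
    rw [h0, mul_zero] at this
    exact (zpow_ne_zero _ hl) this.symm
  have hane : ∀ i : Fin n, a i ≠ 0 := hdf
  have hbne : ∀ i : Fin n, b i ≠ 0 := hdf'
  -- squared forms
  have pow2 : ∀ (x : ℚ) (m : ℤ), (x ^ m) ^ 2 = x ^ (2 * m) := by
    intro x m
    rw [← zpow_natCast (x ^ m) 2, ← zpow_mul, mul_comm]
    norm_num
  have prodsq : ∀ g : Fin n → ℚ, ∀ u : Fin n → ℤ,
      (∏ i : Fin n, g i ^ u i) ^ 2 = ∏ i : Fin n, g i ^ (2 * u i) := by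
    intro g u
    rw [← Finset.prod_pow]
    exact Finset.prod_congr rfl (fun i _ => pow2 _ _)
  -- Claim A : ∏ c i ^ (2 t i) = l ^ χ
  have claimA : (∏ i : Fin n, c i ^ (2 * t i)) = l ^ χ := by
    have step1 : ∀ i : Fin n, c i ^ (2 * t i) = c i ^ t i * c i ^ t i := by
      intro i
      rw [← zpow_add₀ (hcne i)]
      ring_nf
    calc (∏ i : Fin n, c i ^ (2 * t i))
        = ∏ i : Fin n, (c i ^ t i * c i ^ t i) := Finset.prod_congr rfl (fun i _ => step1 i)
      _ = (∏ i : Fin n, c i ^ t i) * ∏ i : Fin n, c i ^ t i := Finset.prod_mul_distrib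
      _ = (∏ i : Fin n, c i.rev ^ t i) * ∏ i : Fin n, c i ^ t i := by
          rw [show (∏ i : Fin n, c i.rev ^ t i) = ∏ i : Fin n, c i.rev ^ t i.rev from
            Finset.prod_congr rfl (fun i _ => by rw [hsignt i]), hrevprod (fun j => c j ^ t j)]
      _ = ∏ i : Fin n, (c i.rev ^ t i * c i ^ t i) := Finset.prod_mul_distrib.symm
      _ = ∏ i : Fin n, (c i.rev * c i) ^ t i :=
          Finset.prod_congr rfl (fun i _ => (mul_zpow _ _ _).symm)
      _ = ∏ i : Fin n, (l ^ (d i : ℤ)) ^ t i :=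
          Finset.prod_congr rfl (fun i _ => by rw [key1 i])
      _ = ∏ i : Fin n, l ^ ((d i : ℤ) * t i) :=
          Finset.prod_congr rfl (fun i _ => (zpow_mul l _ _).symm)
      _ = l ^ (∑ i : Fin n, (d i : ℤ) * t i) := (aux_zpow_sum hl _ _).symm
      _ = l ^ χ := by
          congr 1
          rw [hχ]
          exact Finset.sum_congr rfl (fun i _ => mul_comm _ _)
  -- the z-power factor
  have hzz : ∀ i : Fin n, ((-z⁻¹ : ℚ) ^ (d i)) ^ (2 * s i) = z ^ (2 * ((d i : ℤ) * t i)) := by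
    intro i
    rw [neg_pow, mul_zpow]
    have e1 : (((-1 : ℚ)) ^ (d i)) ^ (2 * s i) = 1 := by
      rcases Nat.even_or_odd (d i) with hp | hp
      · rw [hp.neg_one_pow, one_zpow]
      · rw [hp.neg_one_pow, zpow_mul]
        norm_num
    have e2 : (((z : ℚ)⁻¹) ^ (d i)) ^ (2 * s i) = z ^ (2 * ((d i : ℤ) * t i)) := by
      rw [inv_pow, inv_zpow', ← zpow_natCast z (d i), ← zpow_mul]
      congr 1
      rw [hst i]
      ring
    rw [e1, e2, one_mul]
  -- per-i expansion of b
  have hbb : ∀ i : Fin n, b i ^ (2 * s i) =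
      c i.rev ^ (2 * t i) * (z ^ (2 * ((d i : ℤ) * t i)) * a i.rev ^ (2 * s i)) := by
    intro i
    have hbeq : b i = ((-z⁻¹) ^ (d i) * a i.rev) / c i.rev := by
      rw [eq_div_iff (hcne i.rev), mul_comm]
      exact key2 i
    rw [hbeq, div_zpow, mul_zpow, hzz i]
    rw [div_eq_mul_inv, ← zpow_neg]
    have : -(2 * s i) = 2 * t i := by rw [hst i]; ring
    rw [this]
    ring
  -- assemble
  rw [prodsq b s, prodsq a s]
  calc (∏ i : Fin n, b i ^ (2 * s i))
      = ∏ i : Fin n, (c i.rev ^ (2 * t i) * (z ^ (2 * ((d i : ℤ) * t i)) * a i.rev ^ (2 * s i))) :=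
        Finset.prod_congr rfl (fun i _ => hbb i)
    _ = (∏ i : Fin n, c i.rev ^ (2 * t i)) *
        ((∏ i : Fin n, z ^ (2 * ((d i : ℤ) * t i))) * ∏ i : Fin n, a i.rev ^ (2 * s i)) := by
        rw [Finset.prod_mul_distrib, Finset.prod_mul_distrib]
    _ = l ^ χ * (z ^ (2 * χ) * ∏ i : Fin n, a i ^ (2 * s i)) := by
        congr 1
        · rw [show (∏ i : Fin n, c i.rev ^ (2 * t i)) = ∏ i : Fin n, c i.rev ^ (2 * t i.rev) from
            Finset.prod_congr rfl (fun i _ => by rw [hsignt i]),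
            hrevprod (fun j => c j ^ (2 * t j))]
          exact claimA
        congr 1
        · rw [← aux_zpow_sum hz, ← Finset.mul_sum]
          congr 1
          congr 1
          rw [hχ]
          exact Finset.sum_congr rfl (fun i _ => mul_comm ((d i : ℤ)) (t i))
        · rw [show (∏ i : Fin n, a i.rev ^ (2 * s i)) = ∏ i : Fin n, a i.rev ^ (2 * s i.rev) from
            Finset.prod_congr rfl (fun i _ => by rw [hsigns i]),
            hrevprod (fun j => a j ^ (2 * s j))]
    _ = l ^ χ * z ^ (2 * χ) * ∏ i : Fin n, a i ^ (2 * s i) := by ring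
end
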